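/- Let b ≥ 2 be an integer base, let i₁, i₂ ≥ 0 be integers, let c be an integer with 0 ≤ c ≤ b−1, and let N₁ ≥ 1, N₂, M₁, M₂ be integers with 0 ≤ N₂ ≤ b^{i₂} − 1 and 0 ≤ M₂ ≤ b^{i₁} − 1 and M₁ ≥ 0. Set n = N₁·b^{i₂+1} + c·b^{i₂} + N₂ (the denominator, with digit c in position i₂), m = M₁·b^{i₁+1} + c·b^{i₁} + M₂ (the numerator, with digit c in position i₁), n' = N₁·b^{i₂} + N₂ (the denominator with the digit c deleted) and m' = M₁·b^{i₁} + M₂ (the numerator with the digit c deleted). Then the anomalous-cancellation identity m/n = m'/n' (as an equality of rational numbers, noting n > 0 and n' > 0) holds if and only if the linear Diophantine equation A·M₁ + B·M₂ = C holds, where A = b^{i₁}·(c·b^{i₂} − (b−1)·N₂), B = b^{i₂}·((b−1)·N₁ + c), and C = c·b^{i₁}·(N₁·b^{i₂} + N₂). -/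

import Mathlib

/-! Deleting the digit `c` in position `i` of `X * b ^ (i + 1) + c * b ^ i + Y` lowers it by
`δ = ((b - 1) * X + c) * b ^ i`. Hence `m / n = m' / n'` with `m = m' + δₘ`, `n = n' + δₙ` is the
cross-multiplied equation `δₘ * n' = m' * δₙ`, which is linear in `M₁, M₂` with the stated
coefficients. -/

theorem digit_insert_eq_add {R : Type*} [CommRing R] (b c X Y : R) (i : ℕ) :
    X * b ^ (i + 1) + c * b ^ i + Y = X * b ^ i + Y + ((b - 1) * X + c) * b ^ i := by
  ring

theorem add_div_add_eq_div_iff {K : Type*} [Field K] {a d x y : K} (hd : d ≠ 0)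
    (hdy : d + y ≠ 0) : (a + x) / (d + y) = a / d ↔ x * d = a * y := by
  rw [div_eq_div_iff hdy hd]
  constructor <;> intro h <;> linear_combination h

theorem digit_deletion_cross_sub {R : Type*} [CommRing R] (b c N₁ N₂ M₁ M₂ : R) (k l : ℕ) :
    ((b - 1) * M₁ + c) * b ^ k * (N₁ * b ^ l + N₂) -
        (M₁ * b ^ k + M₂) * (((b - 1) * N₁ + c) * b ^ l) =
      c * b ^ k * (N₁ * b ^ l + N₂) -
        ((b ^ k * (c * b ^ l - (b - 1) * N₂)) * M₁ + (b ^ l * ((b - 1) * N₁ + c)) * M₂) := by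
  ring

theorem anomalous_cancellation_iff_diophantine_general
    (b i₁ i₂ c N₁ N₂ M₁ M₂ : ℤ)
    (hb : 2 ≤ b)
    (hc0 : 0 ≤ c)
    (hN₁ : 1 ≤ N₁) (hN₂0 : 0 ≤ N₂) :
    ((M₁ * b ^ (i₁.toNat + 1) + c * b ^ i₁.toNat + M₂ : ℚ) /
        (N₁ * b ^ (i₂.toNat + 1) + c * b ^ i₂.toNat + N₂ : ℚ) =
      (M₁ * b ^ i₁.toNat + M₂ : ℚ) / (N₁ * b ^ i₂.toNat + N₂ : ℚ)) ↔
    (b ^ i₁.toNat * (c * b ^ i₂.toNat - (b - 1) * N₂)) * M₁ +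
      (b ^ i₂.toNat * ((b - 1) * N₁ + c)) * M₂ =
      c * b ^ i₁.toNat * (N₁ * b ^ i₂.toNat + N₂) := by
  have hpow : 0 < b ^ i₂.toNat := pow_pos (by omega) _
  have hn' : 0 < N₁ * b ^ i₂.toNat + N₂ := by nlinarith
  have hδ : 0 ≤ ((b - 1) * N₁ + c) * b ^ i₂.toNat := mul_nonneg (by nlinarith) hpow.le
  have hn'Q : (N₁ * b ^ i₂.toNat + N₂ : ℚ) ≠ 0 := by exact_mod_cast hn'.ne'
  have hnQ : (N₁ * b ^ i₂.toNat + N₂ + ((b - 1) * N₁ + c) * b ^ i₂.toNat : ℚ) ≠ 0 := by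
    exact_mod_cast (add_pos_of_pos_of_nonneg hn' hδ).ne'
  rw [digit_insert_eq_add (b : ℚ) c M₁ M₂, digit_insert_eq_add (b : ℚ) c N₁ N₂,
    add_div_add_eq_div_iff hn'Q hnQ]
  norm_cast
  rw [← sub_eq_zero, digit_deletion_cross_sub, sub_eq_zero, eq_comm]

theorem anomalous_cancellation_iff_diophantine
    (b i₁ i₂ c N₁ N₂ M₁ M₂ : ℤ)
    (hb : 2 ≤ b) (hi₁ : 0 ≤ i₁) (hi₂ : 0 ≤ i₂)
    (hc0 : 0 ≤ c) (hc1 : c ≤ b - 1)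
    (hN₁ : 1 ≤ N₁) (hN₂0 : 0 ≤ N₂) (hN₂1 : N₂ ≤ b ^ i₂.toNat - 1)
    (hM₁ : 0 ≤ M₁) (hM₂0 : 0 ≤ M₂) (hM₂1 : M₂ ≤ b ^ i₁.toNat - 1) :
    ((M₁ * b ^ (i₁.toNat + 1) + c * b ^ i₁.toNat + M₂ : ℚ) /
        (N₁ * b ^ (i₂.toNat + 1) + c * b ^ i₂.toNat + N₂ : ℚ) =
      (M₁ * b ^ i₁.toNat + M₂ : ℚ) / (N₁ * b ^ i₂.toNat + N₂ : ℚ)) ↔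
    (b ^ i₁.toNat * (c * b ^ i₂.toNat - (b - 1) * N₂)) * M₁ +
      (b ^ i₂.toNat * ((b - 1) * N₁ + c)) * M₂ =
      c * b ^ i₁.toNat * (N₁ * b ^ i₂.toNat + N₂) :=
  anomalous_cancellation_iff_diophantine_general b i₁ i₂ c N₁ N₂ M₁ M₂ hb hc0 hN₁ hN₂0
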